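/- Let M be a symmetric positive definite N×N real matrix, H(x) = √⟨Mx,x⟩, H°(x) = √⟨M⁻¹x,x⟩, T_H(x) = Mx/⟨Mx,x⟩ and T_{H°}(y) = M⁻¹y/⟨M⁻¹y,y⟩ on ℝ^N∖{0}. Then for every y ∈ ℝ^N∖{0} and every v ∈ ℝ^N, DT_{H°}(T_H(y)) (Mv) = H(y)⁴ M⁻¹ (DT_H(y) v); equivalently, for v ≠ 0 with DT_H(y)v ≠ 0, H(v) DT_{H°}(T_H(y)) ∇H(v) = H(y)⁴ H°(DT_H(y)v) ∇H°(DT_H(y)v), where H(v)∇H(v) = Mv and H°(w)∇H°(w) = M⁻¹w. -/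

import Mathlib

/-!
Write `q = ⟨My, y⟩ > 0`, so that `H(y)⁴ = q²`. Differentiating the Kelvin map
`K_A(x) = ⟨Ax, x⟩⁻¹ Ax` of any matrix gives
`DK_A(x) v = ⟨Ax, x⟩⁻¹ Av - ⟨Ax, x⟩⁻² (⟨Ax, v⟩ + ⟨Av, x⟩) Ax`.
At `w = K_M(y)` one has `M⁻¹w = y / q` and `⟨M⁻¹w, w⟩ = 1 / q`, and substituting this into the
formula for `A = M⁻¹` shows that both sides of the identity equal `q v - (⟨My, v⟩ + ⟨Mv, y⟩) y`.
-/

open Matrix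

theorem HasFDerivAt.dotProduct {ι E : Type*} [Fintype ι] [NormedAddCommGroup E]
    [NormedSpace ℝ E] {f g : E → ι → ℝ} {f' g' : E →L[ℝ] ι → ℝ} {x : E}
    (hf : HasFDerivAt f f' x) (hg : HasFDerivAt g g' x) :
    HasFDerivAt (fun z => f z ⬝ᵥ g z)
      ((dotProductBilin ℝ ℝ (f x)).toContinuousLinearMap.comp g' +
        ((dotProductBilin ℝ ℝ).flip (g x)).toContinuousLinearMap.comp f') x := by
  refine (HasFDerivAt.fun_sum fun i _ =>
    (hasFDerivAt_pi'.1 hf i).mul (hasFDerivAt_pi'.1 hg i)).congr_fderiv ?_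
  ext v
  simp [dotProduct_comm (f' v), Finset.sum_add_distrib]
  rfl

namespace Matrix

variable {ι : Type*} [Fintype ι]

theorem nonsing_inv_mulVec_mulVec {R : Type*} [CommRing R] [DecidableEq ι] {A : Matrix ι ι R}
    (hA : IsUnit A.det) (u : ι → R) : A⁻¹ *ᵥ A *ᵥ u = u := by
  rw [mulVec_mulVec, nonsing_inv_mul A hA, one_mulVec]

noncomputable def kelvin (A : Matrix ι ι ℝ) (x : ι → ℝ) : ι → ℝ :=
  (A *ᵥ x ⬝ᵥ x)⁻¹ • A *ᵥ x

theorem hasFDerivAt_mulVec (A : Matrix ι ι ℝ) (x : ι → ℝ) :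
    HasFDerivAt (A *ᵥ ·) A.mulVecLin.toContinuousLinearMap x :=
  A.mulVecLin.toContinuousLinearMap.hasFDerivAt

theorem fderiv_kelvin_apply (A : Matrix ι ι ℝ) {x : ι → ℝ} (hx : A *ᵥ x ⬝ᵥ x ≠ 0)
    (v : ι → ℝ) :
    fderiv ℝ (kelvin A) x v = (A *ᵥ x ⬝ᵥ x)⁻¹ • A *ᵥ v -
      ((A *ᵥ x ⬝ᵥ v + A *ᵥ v ⬝ᵥ x) / (A *ᵥ x ⬝ᵥ x) ^ 2) • A *ᵥ x := by
  have hq : HasFDerivAt (fun z => A *ᵥ z ⬝ᵥ z) _ x :=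
    (hasFDerivAt_mulVec A x).dotProduct (hasFDerivAt_id x)
  have hK : HasFDerivAt (kelvin A) _ x :=
    ((hasFDerivAt_inv hx).comp (f := fun z => A *ᵥ z ⬝ᵥ z) x hq).smul (hasFDerivAt_mulVec A x)
  rw [hK.fderiv]
  simp only [Function.comp_apply, ContinuousLinearMap.comp_id, ContinuousLinearMap.comp_add,
    _root_.add_apply, _root_.smul_apply, LinearMap.coe_toContinuousLinearMap', mulVecBilin_apply,
    ContinuousLinearMap.smulRight_apply, ContinuousLinearMap.comp_apply,
    dotProductBilin_apply_apply, ContinuousLinearMap.toSpanSingleton_apply, LinearMap.flip_apply]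
  module

variable [DecidableEq ι] {A : Matrix ι ι ℝ}

theorem inv_mulVec_kelvin (hA : IsUnit A.det) (y : ι → ℝ) :
    A⁻¹ *ᵥ kelvin A y = (A *ᵥ y ⬝ᵥ y)⁻¹ • y := by
  rw [kelvin, mulVec_smul, nonsing_inv_mulVec_mulVec hA]

theorem inv_mulVec_kelvin_dotProduct_kelvin (hA : IsUnit A.det) (y : ι → ℝ) :
    A⁻¹ *ᵥ kelvin A y ⬝ᵥ kelvin A y = (A *ᵥ y ⬝ᵥ y)⁻¹ := by
  rw [inv_mulVec_kelvin hA, kelvin, smul_dotProduct, dotProduct_smul, dotProduct_comm y,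
    smul_eq_mul, smul_eq_mul, ← mul_assoc]
  simpa using mul_self_mul_inv (A *ᵥ y ⬝ᵥ y)⁻¹

theorem fderiv_kelvin_inv_kelvin_mulVec (hA : IsUnit A.det) {y : ι → ℝ}
    (hy : A *ᵥ y ⬝ᵥ y ≠ 0) (v : ι → ℝ) :
    fderiv ℝ (kelvin A⁻¹) (kelvin A y) (A *ᵥ v) =
      (A *ᵥ y ⬝ᵥ y) ^ 2 • A⁻¹ *ᵥ fderiv ℝ (kelvin A) y v := by
  have hw := inv_mulVec_kelvin_dotProduct_kelvin hA y
  rw [fderiv_kelvin_apply _ (hw ▸ inv_ne_zero hy), fderiv_kelvin_apply _ hy, hw,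
    inv_mulVec_kelvin hA, mulVec_sub, mulVec_smul, mulVec_smul, nonsing_inv_mulVec_mulVec hA,
    nonsing_inv_mulVec_mulVec hA, kelvin, dotProduct_smul, smul_dotProduct, dotProduct_comm y,
    dotProduct_comm v]
  set q := A *ᵥ y ⬝ᵥ y
  simp only [smul_eq_mul]
  match_scalars
  · field_simp
  · field_simp
    ring

end Matrix

theorem kelvin_map_derivative_duality_general {N : ℕ}
    (M : Matrix (Fin N) (Fin N) ℝ) (hM : M.PosDef)
    (H : (Fin N → ℝ) → ℝ)
    (hH : ∀ x, H x = Real.sqrt (M.mulVec x ⬝ᵥ x))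
    (T Tdual : (Fin N → ℝ) → (Fin N → ℝ))
    (hT : ∀ x, T x = (M.mulVec x ⬝ᵥ x)⁻¹ • M.mulVec x)
    (hTdual : ∀ y, Tdual y = (M⁻¹.mulVec y ⬝ᵥ y)⁻¹ • M⁻¹.mulVec y) :
    ∀ y : Fin N → ℝ, y ≠ 0 → ∀ v : Fin N → ℝ,
      fderiv ℝ Tdual (T y) (M.mulVec v) =
        (H y) ^ 4 • M⁻¹.mulVec (fderiv ℝ T y v) := by
  intro y hy v
  have hq : 0 < M *ᵥ y ⬝ᵥ y := by
    simpa [dotProduct_comm] using hM.dotProduct_mulVec_pos hy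
  have hH4 : H y ^ 4 = (M *ᵥ y ⬝ᵥ y) ^ 2 := by
    rw [hH, show 4 = 2 * 2 from rfl, pow_mul, Real.sq_sqrt hq.le]
  rw [show T = M.kelvin from funext hT, show Tdual = M⁻¹.kelvin from funext hTdual, hH4]
  exact fderiv_kelvin_inv_kelvin_mulVec hM.det_pos.ne'.isUnit hq.ne' v

theorem kelvin_map_derivative_duality {N : ℕ}
    (M : Matrix (Fin N) (Fin N) ℝ) (hM : M.PosDef)
    (H Hdual : (Fin N → ℝ) → ℝ)
    (hH : ∀ x, H x = Real.sqrt (M.mulVec x ⬝ᵥ x))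
    (hHdual : ∀ x, Hdual x = Real.sqrt (M⁻¹.mulVec x ⬝ᵥ x))
    (T Tdual : (Fin N → ℝ) → (Fin N → ℝ))
    (hT : ∀ x, T x = (M.mulVec x ⬝ᵥ x)⁻¹ • M.mulVec x)
    (hTdual : ∀ y, Tdual y = (M⁻¹.mulVec y ⬝ᵥ y)⁻¹ • M⁻¹.mulVec y) :
    ∀ y : Fin N → ℝ, y ≠ 0 → ∀ v : Fin N → ℝ,
      fderiv ℝ Tdual (T y) (M.mulVec v) =
        (H y) ^ 4 • M⁻¹.mulVec (fderiv ℝ T y v) :=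
  kelvin_map_derivative_duality_general M hM H hH T Tdual hT hTdual
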